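/- Let λ ≥ 0, let A be a real m×n matrix and b̃ ∈ ℝᵐ, and define Ψ̃(y) = ½‖S_λ(Aᵀy)‖² − ⟨y, b̃⟩. Then for every y ∈ ℝᵐ, Ψ̃ has gradient ∇Ψ̃(y) = A·S_λ(Aᵀy) − b̃ at y, and the gradient map y ↦ A·S_λ(Aᵀy) − b̃ is Lipschitz continuous on ℝᵐ with Lipschitz constant ‖A‖₂². -/

import Mathlib

open scoped RealInnerProductSpace BigOperators
open Matrix

noncomputable def softShrink {n : ℕ} (lam : ℝ) (x : EuclideanSpace ℝ (Fin n)) :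
    EuclideanSpace ℝ (Fin n) :=
  WithLp.toLp 2 (fun i => Real.sign (x i) * max (|x i| - lam) 0)

noncomputable def mulVecE {m n : ℕ} (A : Matrix (Fin m) (Fin n) ℝ)
    (x : EuclideanSpace ℝ (Fin n)) : EuclideanSpace ℝ (Fin m) :=
  Matrix.toEuclideanLin A x

/-- The operator (spectral) norm `‖A‖₂` of the linear map `x ↦ Ax` between
Euclidean spaces. -/
noncomputable def matOpNorm {m n : ℕ} (A : Matrix (Fin m) (Fin n) ℝ) : ℝ :=
  ‖LinearMap.toContinuousLinearMap (Matrix.toEuclideanLin A)‖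



-- 1D derivative lemma
lemma hasDerivAt_shrink_sq (lam : ℝ) (hlam : 0 ≤ lam) (t : ℝ) :
    HasDerivAt (fun u : ℝ => max (|u| - lam) 0 ^ 2)
      (2 * (Real.sign t * max (|t| - lam) 0)) t := by
  rcases lt_trichotomy (|t|) lam with h | h | h
  · have hmax : max (|t| - lam) 0 = 0 := max_eq_right (by linarith)
    rw [hmax, mul_zero, mul_zero]
    have hev : ∀ᶠ u in nhds t, |u| < lam :=
      (continuous_abs.tendsto t).eventually_lt_const h
    have hev' : (fun _ : ℝ => (0:ℝ)) =ᶠ[nhds t] fun u => max (|u| - lam) 0 ^ 2 := by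
      filter_upwards [hev] with u hu
      rw [max_eq_right (by linarith : |u| - lam ≤ 0)]
      norm_num
    exact (hasDerivAt_const t (0:ℝ)).congr_of_eventuallyEq hev'.symm
  · -- boundary case: derivative 0
    have hmax : max (|t| - lam) 0 = 0 := max_eq_right (by linarith)
    rw [hmax, mul_zero, mul_zero]
    rw [hasDerivAt_iff_isLittleO]
    have hO : (fun u : ℝ => max (|u| - lam) 0 ^ 2 - max (|t| - lam) 0 ^ 2 - (u - t) • (0:ℝ))
        =O[nhds t] fun u => (u - t) ^ 2 := by
      apply Asymptotics.isBigO_of_le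
      intro u
      have h1 : max (|u| - lam) 0 ≤ |u - t| := by
        apply max_le _ (abs_nonneg _)
        have := abs_sub_abs_le_abs_sub u t
        linarith [h ▸ this]
      rw [hmax]
      simp only [smul_zero, sub_zero]
      have h2 : max (|u| - lam) 0 ^ 2 ≤ |u - t| ^ 2 :=
        pow_le_pow_left₀ (le_max_right _ 0) h1 2
      rw [Real.norm_eq_abs, Real.norm_eq_abs]
      have h3 : |(u-t)^2| = |u - t| ^ 2 := by rw [abs_of_nonneg (sq_nonneg _), sq_abs]
      have h4 : (0:ℝ) ≤ max (|u| - lam) 0 ^ 2 - 0 ^ 2 := by simp [sq_nonneg]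
      rw [h3, abs_of_nonneg h4]
      simpa using h2
    refine hO.trans_isLittleO ?_
    have h1 : (fun u : ℝ => u - t) =o[nhds t] (fun _ => (1:ℝ)) := by
      rw [Asymptotics.isLittleO_one_iff]
      have : Filter.Tendsto (fun u : ℝ => u - t) (nhds t) (nhds (t - t)) :=
        (continuous_id.sub continuous_const).tendsto t
      simpa using this
    have h2 := h1.mul_isBigO (Asymptotics.isBigO_refl (fun u : ℝ => u - t) (nhds t))
    simpa [sq] using h2
  · -- |t| > lam
    have ht0 : t ≠ 0 := by
      intro h0; rw [h0] at h; simp at h; linarith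
    rcases lt_or_gt_of_ne ht0 with htneg | htpos
    · have hev : ∀ᶠ u in nhds t, u < 0 ∧ lam < -u := by
        have e1 : ∀ᶠ u in nhds t, u < 0 :=
          (continuous_id.tendsto t).eventually_lt_const htneg
        have e2 : ∀ᶠ u in nhds t, lam < -u := by
          have : Filter.Tendsto (fun u : ℝ => -u) (nhds t) (nhds (-t)) :=
            (continuous_neg.tendsto t)
          exact this.eventually_const_lt (by rw [abs_of_neg htneg] at h; linarith)
        exact e1.and e2
      have hd : HasDerivAt (fun u : ℝ => (-u - lam) ^ 2) (2 * (-t - lam) * (-1)) t := by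
        have := (((hasDerivAt_id t).neg.sub_const lam).pow 2)
        refine this.congr_deriv ?_
        push_cast
        simp only [id, Pi.neg_apply]
        ring
      have heq : (fun u : ℝ => (-u - lam) ^ 2) =ᶠ[nhds t] fun u => max (|u| - lam) 0 ^ 2 := by
        filter_upwards [hev] with u ⟨hu1, hu2⟩
        rw [abs_of_neg hu1, max_eq_left (by linarith)]
      have := hd.congr_of_eventuallyEq heq.symm
      refine this.congr_deriv ?_
      rw [abs_of_neg htneg] at h
      rw [Real.sign_of_neg htneg, abs_of_neg htneg, max_eq_left (by linarith)]
      ring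
    · have hev : ∀ᶠ u in nhds t, 0 < u ∧ lam < u := by
        have e1 : ∀ᶠ u in nhds t, 0 < u :=
          (continuous_id.tendsto t).eventually_const_lt htpos
        have e2 : ∀ᶠ u in nhds t, lam < u :=
          (continuous_id.tendsto t).eventually_const_lt (by rw [abs_of_pos htpos] at h; exact h)
        exact e1.and e2
      have hd : HasDerivAt (fun u : ℝ => (u - lam) ^ 2) (2 * (t - lam)) t := by
        have := ((hasDerivAt_id t).sub_const lam).pow 2
        refine this.congr_deriv ?_
        push_cast
        simp only [id, Pi.neg_apply]
        ring
      have heq : (fun u : ℝ => (u - lam) ^ 2) =ᶠ[nhds t] fun u => max (|u| - lam) 0 ^ 2 := by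
        filter_upwards [hev] with u ⟨hu1, hu2⟩
        rw [abs_of_pos hu1, max_eq_left (by linarith)]
      have := hd.congr_of_eventuallyEq heq.symm
      refine this.congr_deriv ?_
      rw [abs_of_pos htpos] at h
      rw [Real.sign_of_pos htpos, abs_of_pos htpos, max_eq_left (by linarith)]
      ring



lemma sq_sign_shrink (lam : ℝ) (hlam : 0 ≤ lam) (t : ℝ) :
    (Real.sign t * max (|t| - lam) 0) ^ 2 = max (|t| - lam) 0 ^ 2 := by
  rcases lt_trichotomy t 0 with ht | ht | ht
  · rw [Real.sign_of_neg ht]; ring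
  · subst ht
    rw [Real.sign_zero, abs_zero, zero_mul, max_eq_right (by linarith)]
  · rw [Real.sign_of_pos ht]; ring

lemma shrink_eq_sub_clamp (lam : ℝ) (hlam : 0 ≤ lam) (t : ℝ) :
    Real.sign t * max (|t| - lam) 0 = t - max (-lam) (min t lam) := by
  rcases lt_or_ge lam t with h | h
  · have ht : 0 < t := lt_of_le_of_lt hlam h
    rw [Real.sign_of_pos ht, abs_of_pos ht, max_eq_left (by linarith),
      min_eq_right h.le, max_eq_right (by linarith)]
    ring
  rcases lt_or_ge t (-lam) with h2 | h2
  · have ht : t < 0 := lt_of_lt_of_le h2 (by linarith)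
    rw [Real.sign_of_neg ht, abs_of_neg ht, max_eq_left (by linarith),
      min_eq_left (by linarith), max_eq_left h2.le]
    ring
  · have habs : |t| ≤ lam := abs_le.mpr ⟨h2, h⟩
    rw [max_eq_right (by linarith), mul_zero,
      min_eq_left h, max_eq_right h2]
    ring

lemma shrink_lipschitz (lam : ℝ) (hlam : 0 ≤ lam) (a b : ℝ) :
    |Real.sign a * max (|a| - lam) 0 - Real.sign b * max (|b| - lam) 0| ≤ |a - b| := by
  have key : ∀ x y : ℝ, y ≤ x →
      |Real.sign x * max (|x| - lam) 0 - Real.sign y * max (|y| - lam) 0| ≤ |x - y| := by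
    intro x y hxy
    rw [shrink_eq_sub_clamp lam hlam, shrink_eq_sub_clamp lam hlam]
    set cx := max (-lam) (min x lam) with hcx
    set cy := max (-lam) (min y lam) with hcy
    have hmono : cy ≤ cx := max_le_max le_rfl (min_le_min hxy le_rfl)
    have hlip : |cx - cy| ≤ |x - y| := by
      calc |cx - cy| ≤ |min x lam - min y lam| := by
            rw [hcx, hcy, max_comm (-lam) (min x lam), max_comm (-lam) (min y lam)]
            exact abs_max_sub_max_le_abs _ _ _
        _ ≤ max |x - y| |lam - lam| := abs_min_sub_min_le_max _ _ _ _
        _ = |x - y| := by simp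
    rw [abs_of_nonneg (by linarith : (0:ℝ) ≤ x - y)] at hlip ⊢
    rw [abs_le] at hlip
    rw [abs_le]
    constructor <;> [linarith; linarith]
  rcases le_total b a with h | h
  · exact key a b h
  · have := key b a h
    rwa [abs_sub_comm, abs_sub_comm b a] at this

lemma hasGradientAt_half_normSq {n : ℕ} (lam : ℝ) (hlam : 0 ≤ lam)
    (x : EuclideanSpace ℝ (Fin n)) :
    HasGradientAt (fun z : EuclideanSpace ℝ (Fin n) => (1/2 : ℝ) * ‖softShrink lam z‖ ^ 2)
      (softShrink lam x) x := by
  have hfun : (fun z : EuclideanSpace ℝ (Fin n) => (1/2 : ℝ) * ‖softShrink lam z‖ ^ 2)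
      = fun z => (1/2 : ℝ) * ∑ i, max (|z i| - lam) 0 ^ 2 := by
    funext z
    rw [EuclideanSpace.norm_eq, Real.sq_sqrt (by positivity)]
    congr 1
    apply Finset.sum_congr rfl
    intro i _
    rw [Real.norm_eq_abs, sq_abs]
    exact sq_sign_shrink lam hlam (z i)
  rw [hfun, hasGradientAt_iff_hasFDerivAt]
  have hi : ∀ i : Fin n, HasFDerivAt
      (fun z : EuclideanSpace ℝ (Fin n) => max (|z i| - lam) 0 ^ 2)
      ((2 * (Real.sign (x i) * max (|x i| - lam) 0)) •
        (PiLp.proj (𝕜 := ℝ) 2 (fun _ : Fin n => ℝ) i)) x :=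
    fun i => by
      have hp : HasFDerivAt (fun z : EuclideanSpace ℝ (Fin n) => z i)
          (PiLp.proj (𝕜 := ℝ) 2 (fun _ : Fin n => ℝ) i) x :=
        (PiLp.proj (𝕜 := ℝ) 2 (fun _ : Fin n => ℝ) i).hasFDerivAt
      exact (hasDerivAt_shrink_sq lam hlam (x i)).comp_hasFDerivAt x hp
  have hsum := HasFDerivAt.fun_sum (fun i (_ : i ∈ Finset.univ) => hi i)
  have hmul := hsum.const_mul (1/2 : ℝ)
  convert hmul using 1
  · rfl
  apply ContinuousLinearMap.ext
  intro u
  simp only [ContinuousLinearMap.smul_apply, ContinuousLinearMap.coe_sum',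
    Finset.sum_apply, smul_eq_mul]
  rw [InnerProductSpace.toDual_apply_apply]
  rw [PiLp.inner_apply]
  rw [Finset.mul_sum]
  apply Finset.sum_congr rfl
  intro i _
  simp only [RCLike.inner_apply, starRingEnd_apply, star_trivial]
  show u i * softShrink lam x i = 1/2 * (2 * (Real.sign (x i) * max (|x i| - lam) 0) * u i)
  show u i * (Real.sign (x i) * max (|x i| - lam) 0) = _
  ring

lemma inner_mulVecE {m n : ℕ} (A : Matrix (Fin m) (Fin n) ℝ)
    (x : EuclideanSpace ℝ (Fin n)) (y : EuclideanSpace ℝ (Fin m)) :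
    ⟪mulVecE A x, y⟫ = ⟪x, mulVecE Aᵀ y⟫ := by
  unfold mulVecE
  rw [← Matrix.conjTranspose_eq_transpose_of_trivial,
    Matrix.toEuclideanLin_conjTranspose_eq_adjoint]
  exact (LinearMap.adjoint_inner_right _ _ _).symm

lemma matOpNorm_transpose {m n : ℕ} (A : Matrix (Fin m) (Fin n) ℝ) :
    matOpNorm Aᵀ = matOpNorm A := by
  unfold matOpNorm
  rw [← Matrix.conjTranspose_eq_transpose_of_trivial,
    Matrix.toEuclideanLin_conjTranspose_eq_adjoint,
    LinearMap.adjoint_toContinuousLinearMap]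
  exact LinearIsometryEquiv.norm_map ContinuousLinearMap.adjoint _

lemma norm_mulVecE_le {m n : ℕ} (A : Matrix (Fin m) (Fin n) ℝ)
    (x : EuclideanSpace ℝ (Fin n)) :
    ‖mulVecE A x‖ ≤ matOpNorm A * ‖x‖ := by
  have := (LinearMap.toContinuousLinearMap (Matrix.toEuclideanLin A)).le_opNorm x
  simpa [mulVecE, matOpNorm] using this

lemma norm_softShrink_sub_le {n : ℕ} (lam : ℝ) (hlam : 0 ≤ lam)
    (x y : EuclideanSpace ℝ (Fin n)) :
    ‖softShrink lam x - softShrink lam y‖ ≤ ‖x - y‖ := by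
  rw [EuclideanSpace.norm_eq, EuclideanSpace.norm_eq]
  apply Real.sqrt_le_sqrt
  apply Finset.sum_le_sum
  intro i _
  have h1 : (softShrink lam x - softShrink lam y) i =
      Real.sign (x i) * max (|x i| - lam) 0 - Real.sign (y i) * max (|y i| - lam) 0 := rfl
  have h2 : (x - y) i = x i - y i := rfl
  rw [h1, h2, Real.norm_eq_abs, Real.norm_eq_abs]
  exact pow_le_pow_left₀ (abs_nonneg _) (shrink_lipschitz lam hlam (x i) (y i)) 2

/-- The perturbed dual objective `Ψ̃(y) = ½‖S_λ(Aᵀy)‖² − ⟨y, b̃⟩` has gradient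
`∇Ψ̃(y) = A·S_λ(Aᵀy) − b̃`, and this gradient map is Lipschitz with constant `‖A‖₂²`. -/
theorem perturbed_dual_gradient {m n : ℕ} (lam : ℝ) (hlam : 0 ≤ lam)
    (A : Matrix (Fin m) (Fin n) ℝ) (btil : EuclideanSpace ℝ (Fin m)) :
    (∀ y : EuclideanSpace ℝ (Fin m),
      HasGradientAt
        (fun w : EuclideanSpace ℝ (Fin m) =>
          (1 / 2) * ‖softShrink lam (mulVecE Aᵀ w)‖ ^ 2 - ⟪w, btil⟫)
        (mulVecE A (softShrink lam (mulVecE Aᵀ y)) - btil) y) ∧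
    (∀ y₁ y₂ : EuclideanSpace ℝ (Fin m),
      ‖(mulVecE A (softShrink lam (mulVecE Aᵀ y₁)) - btil) -
        (mulVecE A (softShrink lam (mulVecE Aᵀ y₂)) - btil)‖ ≤
        matOpNorm A ^ 2 * ‖y₁ - y₂‖) := by
  constructor
  · intro y
    set T := LinearMap.toContinuousLinearMap (Matrix.toEuclideanLin Aᵀ) with hT
    have hTapp : ∀ w, T w = mulVecE Aᵀ w := fun w => rfl
    -- gradient of first part
    have h1 : HasFDerivAt
        (fun w : EuclideanSpace ℝ (Fin m) =>
          (1/2 : ℝ) * ‖softShrink lam (mulVecE Aᵀ w)‖ ^ 2)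
        ((InnerProductSpace.toDual ℝ _ (softShrink lam (mulVecE Aᵀ y))).comp T) y := by
      have hg := (hasGradientAt_half_normSq lam hlam (mulVecE Aᵀ y)).hasFDerivAt
      have hcomp := hg.comp y T.hasFDerivAt
      exact hcomp
    -- gradient of inner part
    have h2 : HasFDerivAt (fun w : EuclideanSpace ℝ (Fin m) => ⟪w, btil⟫)
        (InnerProductSpace.toDual ℝ _ btil) y := by
      have : (fun w : EuclideanSpace ℝ (Fin m) => ⟪w, btil⟫)
          = fun w => (InnerProductSpace.toDual ℝ _ btil) w := by
        funext w
        rw [InnerProductSpace.toDual_apply_apply, real_inner_comm]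
      rw [this]
      exact (InnerProductSpace.toDual ℝ _ btil).hasFDerivAt
    have h3 := h1.sub h2
    rw [hasGradientAt_iff_hasFDerivAt]
    convert h3 using 1
    · rfl
    · rfl
    · rfl
    apply ContinuousLinearMap.ext
    intro u
    simp only [ContinuousLinearMap.sub_apply, ContinuousLinearMap.comp_apply,
      InnerProductSpace.toDual_apply_apply]
    rw [inner_sub_left]
    congr 1
    rw [inner_mulVecE]
    rfl
  · intro y₁ y₂
    have key : mulVecE A (softShrink lam (mulVecE Aᵀ y₁)) - btil -
        (mulVecE A (softShrink lam (mulVecE Aᵀ y₂)) - btil)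
        = mulVecE A (softShrink lam (mulVecE Aᵀ y₁) - softShrink lam (mulVecE Aᵀ y₂)) := by
      unfold mulVecE
      rw [map_sub]
      abel
    rw [key]
    calc ‖mulVecE A (softShrink lam (mulVecE Aᵀ y₁) - softShrink lam (mulVecE Aᵀ y₂))‖
        ≤ matOpNorm A * ‖softShrink lam (mulVecE Aᵀ y₁) - softShrink lam (mulVecE Aᵀ y₂)‖ :=
          norm_mulVecE_le A _
      _ ≤ matOpNorm A * ‖mulVecE Aᵀ y₁ - mulVecE Aᵀ y₂‖ := by
          apply mul_le_mul_of_nonneg_left (norm_softShrink_sub_le lam hlam _ _) (norm_nonneg _)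
      _ = matOpNorm A * ‖mulVecE Aᵀ (y₁ - y₂)‖ := by
          unfold mulVecE; rw [map_sub]
      _ ≤ matOpNorm A * (matOpNorm Aᵀ * ‖y₁ - y₂‖) := by
          apply mul_le_mul_of_nonneg_left (norm_mulVecE_le Aᵀ _) (norm_nonneg _)
      _ = matOpNorm A ^ 2 * ‖y₁ - y₂‖ := by
          rw [matOpNorm_transpose]; ring
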